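/- Let DG = (V, E) be a dynamic graph with node features X, let t be a time, and let M be a Global HopeDGN on DG whose functions AGG, UPDATE, f_1, and f_2 are all injective. Suppose the 2-DWL test on DG is initialized with a node-pair labeling l satisfying l((u, v)) = l((u', v')) if and only if [X_u || X_v] = [X_{u'} || X_{v'}] for all (u, v), (u', v') ∈ V², and uses an injective hash. Then M has exactly the distinguishing power of the 2-DWL test: for every iteration j ≥ 0 and all node pairs s, s' ∈ V², h^{(j)}_t(s) = h^{(j)}_t(s') if and only if c^{(j)}_t(s) = c^{(j)}_t(s'). -/
import Mathlib


/-- Historical interaction sequence `A^{<t}_{u,v}`: the sorted list of all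
timestamps `t' < t` with `(u,v,t') ∈ E` or `(v,u,t') ∈ E`. -/
noncomputable def hist {V : Type} [DecidableEq V] (E : Multiset (V × V × ℝ)) (t : ℝ)
    (u v : V) : List ℝ :=
  ((E.filter fun e => ((e.1 = u ∧ e.2.1 = v) ∨ (e.1 = v ∧ e.2.1 = u)) ∧ e.2.2 < t).map
    fun e => e.2.2).sort (· ≤ ·)

/-- Time-interval sequence `B^t_{u,v}`: obtained from `A^{<t}_{u,v}` by replacing
each timestamp `a` by `t - a`. -/
noncomputable def Bseq {V : Type} [DecidableEq V] (E : Multiset (V × V × ℝ)) (t : ℝ)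
    (u v : V) : List ℝ :=
  (hist E t u v).map fun a => t - a

/-- 2-DWL colors on node pairs at time `t`: `c⁰ = l` and
`c^{j+1}(v₁,v₂) = HASH (c^j(v₁,v₂), {{ (c^j(w,v₂), c^j(v₁,w), A^{<t}_{w,v₁}, A^{<t}_{w,v₂}) : w ∈ V }})`. -/
noncomputable def dwl2 {V : Type} [Fintype V] [DecidableEq V] {C : Type}
    (E : Multiset (V × V × ℝ)) (t : ℝ) (l : V × V → C)
    (hash : C × Multiset (C × C × List ℝ × List ℝ) → C) : ℕ → V × V → C
  | 0 => l
  | j + 1 => fun s =>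
      hash (dwl2 E t l hash j s,
        (Finset.univ : Finset V).val.map fun w =>
          (dwl2 E t l hash j (w, s.2), dwl2 E t l hash j (s.1, w),
           hist E t w s.1, hist E t w s.2))

/-- Global HopeDGN node-pair embeddings at time `t`:
`h⁰(u,v) = [X_u ‖ X_v]` and
`h^{l+1}(s) = UPDATE (h^l(s), AGG {{ ψ(s,w) : w ∈ V }})` with
`ψ((u,v),w) = [f₁([h^l(u,w) ‖ h^l(v,w)]) ‖ f₂([B^t_{u,w} ‖ B^t_{v,w}])]`. -/
noncomputable def hope {V : Type} [Fintype V] [DecidableEq V] {dN d1 d2 dA : ℕ}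
    (E : Multiset (V × V × ℝ)) (t : ℝ) (X : V → Fin dN → ℝ)
    (f1 : (Fin (dN + dN) → ℝ) × (Fin (dN + dN) → ℝ) → Fin d1 → ℝ)
    (f2 : List ℝ × List ℝ → Fin d2 → ℝ)
    (AGG : Multiset ((Fin d1 → ℝ) × (Fin d2 → ℝ)) → Fin dA → ℝ)
    (UPDATE : (Fin (dN + dN) → ℝ) × (Fin dA → ℝ) → Fin (dN + dN) → ℝ) :
    ℕ → V × V → Fin (dN + dN) → ℝ
  | 0 => fun s => Fin.append (X s.1) (X s.2)
  | j + 1 => fun s =>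
      UPDATE (hope E t X f1 f2 AGG UPDATE j s,
        AGG ((Finset.univ : Finset V).val.map fun w =>
          (f1 (hope E t X f1 f2 AGG UPDATE j (s.1, w),
               hope E t X f1 f2 AGG UPDATE j (s.2, w)),
           f2 (Bseq E t s.1 w, Bseq E t s.2 w))))

private lemma append_eq_iff {dN : ℕ} (a b a' b' : Fin dN → ℝ) :
    Fin.append a b = Fin.append a' b' ↔ a = a' ∧ b = b' := by
  constructor
  · intro h
    constructor
    · funext i
      have := congrFun h (Fin.castAdd dN i)
      rwa [Fin.append_left, Fin.append_left] at this
    · funext i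
      have := congrFun h (Fin.natAdd dN i)
      rwa [Fin.append_right, Fin.append_right] at this
  · rintro ⟨rfl, rfl⟩; rfl

private lemma map_eq_map_of {ι α β : Type*} [Nonempty ι] (m : Multiset ι)
    (F F' : ι → α) (G G' : ι → β)
    (h : ∀ x y : ι ⊕ ι, Sum.elim F F' x = Sum.elim F F' y ↔ Sum.elim G G' x = Sum.elim G G' y)
    (hm : m.map F = m.map F') : m.map G = m.map G' := by
  classical
  set Fh := Sum.elim F F' with hFh
  set Gh := Sum.elim G G' with hGh
  obtain ⟨k, hk⟩ : ∃ k : α → β, ∀ x, k (Fh x) = Gh x := by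
    refine ⟨fun a => if h' : ∃ x, Fh x = a then Gh h'.choose
      else Gh (Sum.inl (Classical.arbitrary ι)), fun x => ?_⟩
    have hex : ∃ y, Fh y = Fh x := ⟨x, rfl⟩
    simp only [dif_pos hex]
    exact (h _ _).mp hex.choose_spec
  have h1 : m.map G = (m.map F).map k := by
    rw [Multiset.map_map]
    exact Multiset.map_congr rfl fun x _ => (hk (Sum.inl x)).symm
  have h2 : m.map G' = (m.map F').map k := by
    rw [Multiset.map_map]
    exact Multiset.map_congr rfl fun x _ => (hk (Sum.inr x)).symm
  rw [h1, h2, hm]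

private lemma map_eq_map_iff {ι α β : Type*} [Nonempty ι] (m : Multiset ι)
    (F F' : ι → α) (G G' : ι → β)
    (h : ∀ x y : ι ⊕ ι, Sum.elim F F' x = Sum.elim F F' y ↔ Sum.elim G G' x = Sum.elim G G' y) :
    m.map F = m.map F' ↔ m.map G = m.map G' :=
  ⟨map_eq_map_of m F F' G G' h, map_eq_map_of m G G' F F' fun x y => (h x y).symm⟩

private lemma hist_symm {V : Type} [DecidableEq V] (E : Multiset (V × V × ℝ)) (t : ℝ)
    (u v : V) : hist E t u v = hist E t v u := by
  unfold hist
  have : (E.filter fun e => ((e.1 = u ∧ e.2.1 = v) ∨ (e.1 = v ∧ e.2.1 = u)) ∧ e.2.2 < t)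
      = (E.filter fun e => ((e.1 = v ∧ e.2.1 = u) ∨ (e.1 = u ∧ e.2.1 = v)) ∧ e.2.2 < t) :=
    Multiset.filter_congr fun e _ => by tauto
  rw [this]

private lemma bseq_eq_iff {V : Type} [DecidableEq V] (E : Multiset (V × V × ℝ)) (t : ℝ)
    (u v u' v' : V) : Bseq E t u v = Bseq E t u' v' ↔ hist E t u v = hist E t u' v' := by
  constructor
  · intro h
    have hinj : Function.Injective fun a : ℝ => t - a := fun a b hab => by
      dsimp at hab; linarith
    exact List.map_injective_iff.mpr hinj h
  · intro h; unfold Bseq; rw [h]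

private lemma dwl2_swap {V : Type} [Fintype V] [DecidableEq V] {C : Type} {dN : ℕ}
    (E : Multiset (V × V × ℝ)) (t : ℝ) (X : V → Fin dN → ℝ)
    (l : V × V → C)
    (hl : ∀ p q : V × V,
      l p = l q ↔ Fin.append (X p.1) (X p.2) = Fin.append (X q.1) (X q.2))
    (hash : C × Multiset (C × C × List ℝ × List ℝ) → C)
    (hash_inj : Function.Injective hash) :
    ∀ (j : ℕ) (u v u' v' : V),
      dwl2 E t l hash j (u, v) = dwl2 E t l hash j (u', v') ↔
      dwl2 E t l hash j (v, u) = dwl2 E t l hash j (v', u') := by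
  intro j
  induction j with
  | zero =>
    intro u v u' v'
    simp only [dwl2]
    rw [hl, hl, append_eq_iff, append_eq_iff, and_comm]
  | succ j ih =>
    intro u v u' v'
    haveI : Nonempty V := ⟨u⟩
    have keyS : ∀ a b a' b' w w' : V,
        ((dwl2 E t l hash j (w, b), dwl2 E t l hash j (a, w),
          hist E t w a, hist E t w b) =
         (dwl2 E t l hash j (w', b'), dwl2 E t l hash j (a', w'),
          hist E t w' a', hist E t w' b')) ↔
        ((dwl2 E t l hash j (w, a), dwl2 E t l hash j (b, w),
          hist E t w b, hist E t w a) =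
         (dwl2 E t l hash j (w', a'), dwl2 E t l hash j (b', w'),
          hist E t w' b', hist E t w' a')) := by
      intro a b a' b' w w'
      simp only [Prod.mk.injEq]
      rw [ih w b w' b', ih a w a' w']
      tauto
    simp only [dwl2, hash_inj.eq_iff, Prod.mk.injEq]
    rw [ih u v u' v']
    refine and_congr Iff.rfl (map_eq_map_iff _ _ _ _ _ ?_)
    rintro (w | w) (w' | w') <;>
      simp only [Sum.elim_inl, Sum.elim_inr]
    · exact keyS u v u v w w'
    · exact keyS u v u' v' w w'
    · exact keyS u' v' u v w w'
    · exact keyS u' v' u' v' w w'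

/-- a Global HopeDGN with injective `AGG`, `UPDATE`, `f₁`, `f₂`
has exactly the distinguishing power of the 2-DWL test (initialized with a
feature-consistent node-pair labeling and an injective hash): at time `t`, for
every iteration `j` and all node pairs `s`, `s'`, the HopeDGN embeddings are
equal if and only if the 2-DWL colors are equal. -/
theorem hope_equivalent_to_dwl2 {V : Type} [Fintype V] [DecidableEq V]
    {C : Type} {dN d1 d2 dA : ℕ}
    (E : Multiset (V × V × ℝ)) (t : ℝ)
    (X : V → Fin dN → ℝ)
    (l : V × V → C)
    (hl : ∀ p q : V × V,
      l p = l q ↔ Fin.append (X p.1) (X p.2) = Fin.append (X q.1) (X q.2))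
    (hash : C × Multiset (C × C × List ℝ × List ℝ) → C)
    (hash_inj : Function.Injective hash)
    (f1 : (Fin (dN + dN) → ℝ) × (Fin (dN + dN) → ℝ) → Fin d1 → ℝ)
    (f2 : List ℝ × List ℝ → Fin d2 → ℝ)
    (AGG : Multiset ((Fin d1 → ℝ) × (Fin d2 → ℝ)) → Fin dA → ℝ)
    (UPDATE : (Fin (dN + dN) → ℝ) × (Fin dA → ℝ) → Fin (dN + dN) → ℝ)
    (f1_inj : Function.Injective f1) (f2_inj : Function.Injective f2)
    (AGG_inj : Function.Injective AGG) (UPDATE_inj : Function.Injective UPDATE) :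
    ∀ (j : ℕ) (s s' : V × V),
      hope E t X f1 f2 AGG UPDATE j s = hope E t X f1 f2 AGG UPDATE j s' ↔
      dwl2 E t l hash j s = dwl2 E t l hash j s' := by
  have hswap := dwl2_swap E t X l hl hash hash_inj
  intro j
  induction j with
  | zero =>
    intro s s'
    simp only [hope, dwl2]
    exact (hl s s').symm
  | succ j ih =>
    intro s s'
    haveI : Nonempty V := ⟨s.1⟩
    have key2 : ∀ (p q : V × V) (w w' : V),
        ((f1 (hope E t X f1 f2 AGG UPDATE j (p.1, w), hope E t X f1 f2 AGG UPDATE j (p.2, w)),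
          f2 (Bseq E t p.1 w, Bseq E t p.2 w)) =
         (f1 (hope E t X f1 f2 AGG UPDATE j (q.1, w'), hope E t X f1 f2 AGG UPDATE j (q.2, w')),
          f2 (Bseq E t q.1 w', Bseq E t q.2 w'))) ↔
        ((dwl2 E t l hash j (w, p.2), dwl2 E t l hash j (p.1, w),
          hist E t w p.1, hist E t w p.2) =
         (dwl2 E t l hash j (w', q.2), dwl2 E t l hash j (q.1, w'),
          hist E t w' q.1, hist E t w' q.2)) := by
      intro p q w w'
      rw [Prod.mk.injEq, f1_inj.eq_iff, f2_inj.eq_iff, Prod.mk.injEq, Prod.mk.injEq,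
        Prod.mk.injEq, Prod.mk.injEq, Prod.mk.injEq,
        ih (p.1, w) (q.1, w'), ih (p.2, w) (q.2, w'),
        hswap j p.2 w q.2 w',
        bseq_eq_iff E t p.1 w q.1 w', bseq_eq_iff E t p.2 w q.2 w',
        hist_symm E t p.1 w, hist_symm E t p.2 w,
        hist_symm E t q.1 w', hist_symm E t q.2 w']
      tauto
    simp only [hope, dwl2, UPDATE_inj.eq_iff, hash_inj.eq_iff, Prod.mk.injEq,
      AGG_inj.eq_iff, ih s s']
    refine and_congr Iff.rfl (map_eq_map_iff _ _ _ _ _ ?_)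
    rintro (w | w) (w' | w') <;>
      simp only [Sum.elim_inl, Sum.elim_inr]
    · exact key2 s s w w'
    · exact key2 s s' w w'
    · exact key2 s' s w w'
    · exact key2 s' s' w w'
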